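/- The points P = (-262/13, 32a+8) and Q = (-366/13, 32a+8) lie on the elliptic curve E_222(a): y^2 = x^3 + (16a + 942/13)x^2 + (10048a/13 + 293084/169)x + (1024a^2 + 1620800a/169 + 30250696/2197) over the function field ℚ(a). -/
import Mathlib


open WeierstrassCurve

instance : CharZero (RatFunc ℚ) :=
  charZero_of_injective_algebraMap (algebraMap ℚ (RatFunc ℚ)).injective

/-- The curve `E_222(a)` over `ℚ(a)`. -/
noncomputable def E222 : WeierstrassCurve.Affine (RatFunc ℚ) :=
  { a₁ := 0, a₃ := 0,
    a₂ := 16 * RatFunc.X + 942 / 13,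
    a₄ := 10048 / 13 * RatFunc.X + 293084 / 169,
    a₆ := 1024 * RatFunc.X ^ 2 + 1620800 / 169 * RatFunc.X + 30250696 / 2197 }

/-- The points `P = (-262/13, 32a+8)` and `Q = (-366/13, 32a+8)` lie on `E_222(a)`. -/
theorem stmt_12 :
    E222.Equation (-262 / 13) (32 * RatFunc.X + 8) ∧
    E222.Equation (-366 / 13) (32 * RatFunc.X + 8) := by
  have h2 : (169 : RatFunc ℚ)⁻¹ = 13⁻¹ * 13⁻¹ := by
    rw [show (169 : RatFunc ℚ) = 13 * 13 by norm_num, mul_inv]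
  have h3 : (2197 : RatFunc ℚ)⁻¹ = 13⁻¹ * 13⁻¹ * 13⁻¹ := by
    rw [show (2197 : RatFunc ℚ) = 13 * 13 * 13 by norm_num, mul_inv, mul_inv]
  have hc : (13 : RatFunc ℚ) * 13⁻¹ = 1 := mul_inv_cancel₀ (by norm_num)
  constructor <;>
  · rw [WeierstrassCurve.Affine.equation_iff]
    simp only [E222, div_eq_mul_inv, h2, h3]
    linear_combination ((-64 - 512 * RatFunc.X) + (-832 - 6656 * RatFunc.X) * (13 : RatFunc ℚ)⁻¹
      - 10816 * (13 : RatFunc ℚ)⁻¹ ^ 2) * hc
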